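/- arXiv:1807.06908 — 3 statements merged into one kernel-verified Lean document; each statement's English description precedes it below -/
import Mathlib

section
/- For h a smooth positive function and ψ, u sufficiently regular, the operators 𝔗[h] : v ↦ v − (1/(3h)) ∇(h³ ∇·v) and 𝔱[h] : ψ ↦ ψ − (μ/3) h³ ∇·(h^{-1}∇ψ) (with μ = 1 in 𝔱 for this identity, i.e. 𝔱[h]ψ = ψ − (1/3) h³∇·(h^{-1}∇ψ)) satisfy the conjugation identities 𝔗[h](h^{-1}∇ψ) = h^{-1}∇(𝔱[h]ψ) and h³ ∇·(𝔗[h]u) = 𝔱[h](h³ ∇·u). -/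
open MeasureTheory
open scoped FourierTransform ENNReal NNReal

noncomputable def hNormC (d : ℕ) (s : ℝ) (f : EuclideanSpace ℝ (Fin d) → ℂ) : ℝ≥0∞ :=
  (∫⁻ ξ, ENNReal.ofReal ((1 + ‖ξ‖ ^ 2) ^ s) * (‖𝓕 f ξ‖₊ : ℝ≥0∞) ^ 2) ^ (1/2 : ℝ)

noncomputable def hNormR (d : ℕ) (s : ℝ) (f : EuclideanSpace ℝ (Fin d) → ℝ) : ℝ≥0∞ :=
  hNormC d s (fun x => (f x : ℂ))

/-- Gradient of a scalar function on `ℝ^d`. -/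
noncomputable def eGrad {d : ℕ} (f : EuclideanSpace ℝ (Fin d) → ℝ) (x : EuclideanSpace ℝ (Fin d)) :
    EuclideanSpace ℝ (Fin d) :=
  (EuclideanSpace.equiv (Fin d) ℝ).symm fun i => fderiv ℝ f x (EuclideanSpace.single i 1)

/-- Divergence of a vector field on `ℝ^d`. -/
noncomputable def eDiv {d : ℕ} (v : EuclideanSpace ℝ (Fin d) → EuclideanSpace ℝ (Fin d))
    (x : EuclideanSpace ℝ (Fin d)) : ℝ :=
  ∑ i, fderiv ℝ v x (EuclideanSpace.single i 1) i

/-- The scalar elliptic operator `𝔱[h] ψ = ψ - (μ/3) h³ ∇·(h⁻¹ ∇ψ)`. -/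
noncomputable def tOp {d : ℕ} (μ : ℝ) (h ψ : EuclideanSpace ℝ (Fin d) → ℝ)
    (x : EuclideanSpace ℝ (Fin d)) : ℝ :=
  ψ x - μ / 3 * (h x) ^ 3 * eDiv (fun y => (h y)⁻¹ • eGrad ψ y) x

/-- The Green-Naghdi operator `𝔗[h] v = v - (1/(3h)) ∇(h³ ∇·v)`. -/
noncomputable def TOp {d : ℕ} (h : EuclideanSpace ℝ (Fin d) → ℝ)
    (v : EuclideanSpace ℝ (Fin d) → EuclideanSpace ℝ (Fin d))
    (x : EuclideanSpace ℝ (Fin d)) : EuclideanSpace ℝ (Fin d) :=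
  v x - (1 / (3 * h x)) • eGrad (fun y => (h y) ^ 3 * eDiv v y) x

/-! ### Auxiliary lemmas -/

lemma contDiff_eGrad {d : ℕ} {f : EuclideanSpace ℝ (Fin d) → ℝ} (hf : ContDiff ℝ (⊤ : ℕ∞) f) :
    ContDiff ℝ (⊤ : ℕ∞) (eGrad f) := by
  have hD : ContDiff ℝ (⊤ : ℕ∞) (fderiv ℝ f) := hf.fderiv_right (by simp)
  exact ((EuclideanSpace.equiv (Fin d) ℝ).symm.contDiff).comp
    (contDiff_pi.mpr fun i => hD.clm_apply contDiff_const)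

lemma contDiff_eDiv {d : ℕ} {v : EuclideanSpace ℝ (Fin d) → EuclideanSpace ℝ (Fin d)}
    (hv : ContDiff ℝ (⊤ : ℕ∞) v) : ContDiff ℝ (⊤ : ℕ∞) (eDiv v) := by
  have hD : ContDiff ℝ (⊤ : ℕ∞) (fderiv ℝ v) := hv.fderiv_right (by simp)
  apply ContDiff.sum
  intro i _
  exact ((EuclideanSpace.proj i).contDiff).comp (hD.clm_apply contDiff_const)

lemma eGrad_sub {d : ℕ} {f g : EuclideanSpace ℝ (Fin d) → ℝ} {x : EuclideanSpace ℝ (Fin d)}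
    (hf : DifferentiableAt ℝ f x) (hg : DifferentiableAt ℝ g x) :
    eGrad (fun y => f y - g y) x = eGrad f x - eGrad g x := by
  unfold eGrad
  rw [fderiv_fun_sub hf hg, ← map_sub]
  congr 1

lemma eGrad_const_mul {d : ℕ} {f : EuclideanSpace ℝ (Fin d) → ℝ} {x : EuclideanSpace ℝ (Fin d)}
    (c : ℝ) (hf : DifferentiableAt ℝ f x) :
    eGrad (fun y => c * f y) x = c • eGrad f x := by
  unfold eGrad
  rw [fderiv_const_mul hf, ← _root_.map_smul]
  congr 1

lemma eDiv_sub {d : ℕ} {v w : EuclideanSpace ℝ (Fin d) → EuclideanSpace ℝ (Fin d)}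
    {x : EuclideanSpace ℝ (Fin d)}
    (hv : DifferentiableAt ℝ v x) (hw : DifferentiableAt ℝ w x) :
    eDiv (fun y => v y - w y) x = eDiv v x - eDiv w x := by
  unfold eDiv
  rw [fderiv_fun_sub hv hw, ← Finset.sum_sub_distrib]
  congr 1

lemma eDiv_const_smul {d : ℕ} {v : EuclideanSpace ℝ (Fin d) → EuclideanSpace ℝ (Fin d)}
    {x : EuclideanSpace ℝ (Fin d)} (c : ℝ) (hv : DifferentiableAt ℝ v x) :
    eDiv (fun y => c • v y) x = c * eDiv v x := by
  unfold eDiv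
  rw [fderiv_fun_const_smul hv, Finset.mul_sum]
  congr 1

/-- Conjugation identities between `𝔗[h]` and `𝔱[h]` (with `μ = 1`):
`𝔗[h](h⁻¹∇ψ) = h⁻¹∇(𝔱[h]ψ)` and `h³∇·(𝔗[h]u) = 𝔱[h](h³∇·u)`. -/
theorem TOp_tOp_conjugation (d : ℕ) (hstar : ℝ) (hhst : 0 < hstar)
    (h ψ : EuclideanSpace ℝ (Fin d) → ℝ)
    (u : EuclideanSpace ℝ (Fin d) → EuclideanSpace ℝ (Fin d))
    (hsm : ContDiff ℝ (⊤ : ℕ∞) h) (hpos : ∀ x, hstar ≤ h x)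
    (hψ : ContDiff ℝ (⊤ : ℕ∞) ψ) (hu : ContDiff ℝ (⊤ : ℕ∞) u) :
    (∀ x, TOp h (fun y => (h y)⁻¹ • eGrad ψ y) x = (h x)⁻¹ • eGrad (tOp 1 h ψ) x) ∧
    (∀ x, (h x) ^ 3 * eDiv (TOp h u) x = tOp 1 h (fun y => (h y) ^ 3 * eDiv u y) x) := by
  have hne : ∀ x, h x ≠ 0 := fun x => ne_of_gt (lt_of_lt_of_le hhst (hpos x))
  have hinv : ContDiff ℝ (⊤ : ℕ∞) (fun y => (h y)⁻¹) := hsm.inv hne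
  have hh3 : ContDiff ℝ (⊤ : ℕ∞) (fun y => (h y) ^ 3) := hsm.pow 3
  constructor
  · -- first identity
    intro x
    set w : EuclideanSpace ℝ (Fin d) → EuclideanSpace ℝ (Fin d) :=
      fun y => (h y)⁻¹ • eGrad ψ y with hw_def
    have hw : ContDiff ℝ (⊤ : ℕ∞) w := hinv.smul (contDiff_eGrad hψ)
    have hg1 : ContDiff ℝ (⊤ : ℕ∞) (fun y => (h y) ^ 3 * eDiv w y) := hh3.mul (contDiff_eDiv hw)
    have hstep : eGrad (tOp 1 h ψ) x
        = eGrad ψ x - (1 / 3 : ℝ) • eGrad (fun y => (h y) ^ 3 * eDiv w y) x := by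
      have : tOp 1 h ψ = fun y => ψ y - (1 / 3 : ℝ) * ((h y) ^ 3 * eDiv w y) := by
        funext y
        simp only [tOp, hw_def]
        ring
      rw [this, eGrad_sub (hψ.differentiable (by simp) x)
        (((contDiff_const.mul hg1).differentiable (by simp)) x),
        eGrad_const_mul _ ((hg1.differentiable (by simp)) x)]
    simp only [TOp, hstep, smul_sub, smul_smul]
    congr 2
    ring
  · -- second identity
    intro x
    set g : EuclideanSpace ℝ (Fin d) → ℝ := fun y => (h y) ^ 3 * eDiv u y with hg_def
    have hg : ContDiff ℝ (⊤ : ℕ∞) g := hh3.mul (contDiff_eDiv hu)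
    have hGr : ContDiff ℝ (⊤ : ℕ∞) (eGrad g) := contDiff_eGrad hg
    have hiG : ContDiff ℝ (⊤ : ℕ∞) (fun y => (h y)⁻¹ • eGrad g y) := hinv.smul hGr
    have hTe : TOp h u = fun y => u y - (1 / 3 : ℝ) • ((h y)⁻¹ • eGrad g y) := by
      funext y
      simp only [TOp, hg_def, smul_smul]
      congr 2
      field_simp
    rw [hTe, eDiv_sub ((hu.differentiable (by simp)) x)
      (show DifferentiableAt ℝ (fun y => (1 / 3 : ℝ) • ((h y)⁻¹ • eGrad g y)) x from (((contDiff_const (c := (1 / 3 : ℝ))).smul hiG).differentiable (by simp)) x),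
      eDiv_const_smul _ ((hiG.differentiable (by simp)) x)]
    simp only [tOp, hg_def]
    ring
end

section
/- For the principal symbol L = i(Θ I + ξ_x A_x(U) + ξ_y A_y(U)) of the Favrie-Gavrilyuk system in dimension d = 2, explicitly L = i·[[Θ, h ξ^T, 0, 0],[α ξ, Θ I₂, β ξ, 0],[0,0,Θ,0],[0,0,0,Θ]] (a 5×5 matrix in variables (ζ, u_x, u_y, η, w)), with ξ = (ξ_x, ξ_y)^T ≠ 0, the characteristic equation det L = 0 has the root Θ = 0 with multiplicity 3, and the two simple roots Θ = ±√(α h)|ξ|, with corresponding eigenvectors (∓√h |ξ|, √α ξ_x, √α ξ_y, 0, 0) for the simple roots. -/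
/-!
The last two rows of `FGsymbol Θ` are `Θ` times unit vectors, so the determinant is `Θ²` times
that of the `3 × 3` block in `(ζ, u)`, which is `Θ (Θ² - α h |ξ|²)`. On vectors of the form
`(c, a ξ, 0, 0)` the symbol acts as the `2 × 2` matrix `[[Θ, h |ξ|²], [α, Θ]]` on `(c, a)`, and
`(c, a) = (∓√h |ξ|, √α)` is its kernel vector at `Θ = ±√(α h) |ξ|`.
-/

/-- The matrix `M(Θ)` with `L = i·M(Θ)` the principal symbol of the Favrie-Gavrilyuk
system in dimension `d = 2`, in the variables `(ζ, u_x, u_y, η, w)`. -/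
def FGsymbol (Θ h α β ξx ξy : ℝ) : Matrix (Fin 5) (Fin 5) ℝ :=
  !![Θ, h * ξx, h * ξy, 0, 0;
     α * ξx, Θ, 0, β * ξx, 0;
     α * ξy, 0, Θ, β * ξy, 0;
     0, 0, 0, Θ, 0;
     0, 0, 0, 0, Θ]

theorem FGsymbol_det (Θ h α β ξx ξy : ℝ) :
    (FGsymbol Θ h α β ξx ξy).det = Θ ^ 3 * (Θ ^ 2 - α * h * (ξx ^ 2 + ξy ^ 2)) := by
  simp [FGsymbol, Matrix.det_succ_row_zero, Fin.sum_univ_succ, Fin.succAbove]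
  ring

theorem FGsymbol_mulVec_eq_zero {Θ h α β ξx ξy c a : ℝ}
    (hζ : Θ * c + h * a * (ξx ^ 2 + ξy ^ 2) = 0) (hu : α * c + Θ * a = 0) :
    (FGsymbol Θ h α β ξx ξy).mulVec ![c, a * ξx, a * ξy, 0, 0] = 0 := by
  ext i
  fin_cases i <;> simp [FGsymbol, Matrix.mulVec, dotProduct, Fin.sum_univ_five]
  · linear_combination hζ
  · linear_combination ξx * hu
  · linear_combination ξy * hu

theorem sq_add_sq_pos_of_ne_zero {x y : ℝ} (hxy : (x, y) ≠ (0, 0)) : 0 < x ^ 2 + y ^ 2 := by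
  rcases not_and_or.mp (fun h => hxy (Prod.ext h.1 h.2)) with hx | hy <;> positivity

theorem FGsymbol_mulVec_sqrt_eigenvectors {h α : ℝ} (hh : 0 ≤ h) (hα : 0 ≤ α) (β ξx ξy : ℝ) :
    (FGsymbol (√(α * h) * √(ξx ^ 2 + ξy ^ 2)) h α β ξx ξy).mulVec
      ![-(√h * √(ξx ^ 2 + ξy ^ 2)), √α * ξx, √α * ξy, 0, 0] = 0 ∧
    (FGsymbol (-(√(α * h) * √(ξx ^ 2 + ξy ^ 2))) h α β ξx ξy).mulVec
      ![√h * √(ξx ^ 2 + ξy ^ 2), √α * ξx, √α * ξy, 0, 0] = 0 := by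
  have sα := Real.mul_self_sqrt hα
  have sh := Real.mul_self_sqrt hh
  have sr := Real.mul_self_sqrt (by positivity : 0 ≤ ξx ^ 2 + ξy ^ 2)
  have hζ : √(α * h) * √(ξx ^ 2 + ξy ^ 2) * -(√h * √(ξx ^ 2 + ξy ^ 2))
      + h * √α * (ξx ^ 2 + ξy ^ 2) = 0 := by
    rw [Real.sqrt_mul hα]
    linear_combination -(√α * √(ξx ^ 2 + ξy ^ 2) ^ 2) * sh - √α * h * sr
  have hu : α * -(√h * √(ξx ^ 2 + ξy ^ 2)) + √(α * h) * √(ξx ^ 2 + ξy ^ 2) * √α = 0 := by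
    rw [Real.sqrt_mul hα]
    linear_combination √h * √(ξx ^ 2 + ξy ^ 2) * sα
  -- both kernel equations are odd in `(Θ, c)`, so the second pair comes from the first
  exact ⟨FGsymbol_mulVec_eq_zero hζ hu,
    FGsymbol_mulVec_eq_zero (by linear_combination hζ) (by linear_combination -hu)⟩

theorem FG_principal_symbol_eigenstructure_general (μ lam η h ξx ξy : ℝ)
    (hh : 0 < h) (hμ : 0 < μ) (hlam : 0 < lam)
    (α β : ℝ) (hα : α = 1 + μ * lam * η ^ 2 / (3 * h ^ 3))
    (hξ : (ξx, ξy) ≠ (0, 0)) :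
    (∀ Θ : ℝ, (FGsymbol Θ h α β ξx ξy).det = Θ ^ 3 * (Θ ^ 2 - α * h * (ξx ^ 2 + ξy ^ 2))) ∧
    α * h * (ξx ^ 2 + ξy ^ 2) ≠ 0 ∧
    (FGsymbol (Real.sqrt (α * h) * Real.sqrt (ξx ^ 2 + ξy ^ 2)) h α β ξx ξy).mulVec
      ![-(Real.sqrt h * Real.sqrt (ξx ^ 2 + ξy ^ 2)), Real.sqrt α * ξx, Real.sqrt α * ξy, 0, 0]
      = 0 ∧
    (FGsymbol (-(Real.sqrt (α * h) * Real.sqrt (ξx ^ 2 + ξy ^ 2))) h α β ξx ξy).mulVec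
      ![Real.sqrt h * Real.sqrt (ξx ^ 2 + ξy ^ 2), Real.sqrt α * ξx, Real.sqrt α * ξy, 0, 0]
      = 0 := by
  have hα0 : 0 < α := by rw [hα]; positivity
  have hr := sq_add_sq_pos_of_ne_zero hξ
  exact ⟨(FGsymbol_det · h α β ξx ξy), by positivity,
    FGsymbol_mulVec_sqrt_eigenvectors hh.le hα0.le β ξx ξy⟩

/-- Eigenstructure of the principal symbol: `det L = 0` has the root `Θ = 0` with
multiplicity 3 (i.e. `det M(Θ) = Θ³(Θ² - α h |ξ|²)` with `α h |ξ|² ≠ 0`), and the two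
simple roots `Θ = ±√(αh)|ξ|` with eigenvectors `(∓√h |ξ|, √α ξx, √α ξy, 0, 0)`. -/
theorem FG_principal_symbol_eigenstructure (μ lam η h ξx ξy : ℝ)
    (hh : 0 < h) (hμ : 0 < μ) (hlam : 0 < lam)
    (α β : ℝ) (hα : α = 1 + μ * lam * η ^ 2 / (3 * h ^ 3))
    (hβ : β = μ * lam / (3 * h) * (1 - 2 * η / h))
    (hξ : (ξx, ξy) ≠ (0, 0)) :
    (∀ Θ : ℝ, (FGsymbol Θ h α β ξx ξy).det = Θ ^ 3 * (Θ ^ 2 - α * h * (ξx ^ 2 + ξy ^ 2))) ∧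
    α * h * (ξx ^ 2 + ξy ^ 2) ≠ 0 ∧
    (FGsymbol (Real.sqrt (α * h) * Real.sqrt (ξx ^ 2 + ξy ^ 2)) h α β ξx ξy).mulVec
      ![-(Real.sqrt h * Real.sqrt (ξx ^ 2 + ξy ^ 2)), Real.sqrt α * ξx, Real.sqrt α * ξy, 0, 0]
      = 0 ∧
    (FGsymbol (-(Real.sqrt (α * h) * Real.sqrt (ξx ^ 2 + ξy ^ 2))) h α β ξx ξy).mulVec
      ![Real.sqrt h * Real.sqrt (ξx ^ 2 + ξy ^ 2), Real.sqrt α * ξx, Real.sqrt α * ξy, 0, 0]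
      = 0 :=
  FG_principal_symbol_eigenstructure_general μ lam η h ξx ξy hh hμ hlam α β hα hξ
end

section
/- In dimension d = 2, the matrix S = [[α, 0, 0, β, 0],[0, h, 0, 0, 0],[0, 0, h, 0, 0],[β, 0, 0, γ, 0],[0,0,0,0,1]] is a symmetrizer of the Favrie-Gavrilyuk system: with A_x, A_y the coefficient matrices of the quasilinear form (whose only nonzero entries are (A_x)_{1,2} = h, (A_x)_{2,1} = α, (A_x)_{2,4} = β, (A_x)_{1,1}=(A_x)_{2,2}=...=u_x on the diagonal, and similarly for A_y), the products S A_x and S A_y are symmetric matrices; moreover, if h ≥ h⋆ > 0 and γ > β²/α, then S is symmetric positive definite. -/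
/-!
Multiplying out, `S A_x` and `S A_y` are visibly symmetric. The quadratic form of `S` splits as
`α ζ² + 2β ζη + γ η² + h (u_x² + u_y²) + w²`, and its binary part is positive definite because
`α > 0` and `αγ > β²`: completing the square, `α (α ζ² + 2β ζη + γ η²) = (α ζ + β η)² + (αγ - β²) η²`.
-/

/-- Coefficient matrix `A_x` of the quasilinear Favrie-Gavrilyuk system in the
variables `(ζ, u_x, u_y, η, w)`. -/
def FGAx (ux h α β : ℝ) : Matrix (Fin 5) (Fin 5) ℝ :=
  !![ux, h, 0, 0, 0;
     α, ux, 0, β, 0;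
     0, 0, ux, 0, 0;
     0, 0, 0, ux, 0;
     0, 0, 0, 0, ux]

/-- Coefficient matrix `A_y`. -/
def FGAy (uy h α β : ℝ) : Matrix (Fin 5) (Fin 5) ℝ :=
  !![uy, 0, h, 0, 0;
     0, uy, 0, 0, 0;
     α, 0, uy, β, 0;
     0, 0, 0, uy, 0;
     0, 0, 0, 0, uy]

/-- The symmetrizer `S`. -/
def FGS (h α β γ : ℝ) : Matrix (Fin 5) (Fin 5) ℝ :=
  !![α, 0, 0, β, 0;
     0, h, 0, 0, 0;
     0, 0, h, 0, 0;
     β, 0, 0, γ, 0;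
     0, 0, 0, 0, 1]

open Matrix

lemma FGS_mul_FGAx (h α β γ ux : ℝ) :
    FGS h α β γ * FGAx ux h α β =
      !![α * ux, α * h, 0, β * ux, 0;
         α * h, h * ux, 0, β * h, 0;
         0, 0, h * ux, 0, 0;
         β * ux, β * h, 0, γ * ux, 0;
         0, 0, 0, 0, ux] := by
  ext i j
  fin_cases i <;> fin_cases j <;>
    simp [FGS, FGAx, Matrix.mul_apply, Fin.sum_univ_five] <;> ring

lemma FGS_mul_FGAy (h α β γ uy : ℝ) :
    FGS h α β γ * FGAy uy h α β =
      !![α * uy, 0, α * h, β * uy, 0;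
         0, h * uy, 0, 0, 0;
         α * h, 0, h * uy, β * h, 0;
         β * uy, 0, β * h, γ * uy, 0;
         0, 0, 0, 0, uy] := by
  ext i j
  fin_cases i <;> fin_cases j <;>
    simp [FGS, FGAy, Matrix.mul_apply, Fin.sum_univ_five] <;> ring

lemma isSymm_FGS_mul_FGAx (h α β γ ux : ℝ) : (FGS h α β γ * FGAx ux h α β).IsSymm := by
  rw [FGS_mul_FGAx]
  ext i j
  fin_cases i <;> fin_cases j <;> rfl

lemma isSymm_FGS_mul_FGAy (h α β γ uy : ℝ) : (FGS h α β γ * FGAy uy h α β).IsSymm := by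
  rw [FGS_mul_FGAy]
  ext i j
  fin_cases i <;> fin_cases j <;> rfl

lemma FGS_isHermitian (h α β γ : ℝ) : (FGS h α β γ).IsHermitian := by
  ext i j
  fin_cases i <;> fin_cases j <;> rfl

lemma dotProduct_FGS_mulVec (h α β γ : ℝ) (x : Fin 5 → ℝ) :
    star x ⬝ᵥ (FGS h α β γ *ᵥ x) =
      (α * x 0 ^ 2 + 2 * β * x 0 * x 3 + γ * x 3 ^ 2) + h * x 1 ^ 2 + h * x 2 ^ 2 + x 4 ^ 2 := by
  simp only [dotProduct, Pi.star_apply, star_trivial, mulVec, FGS, of_apply, cons_val',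
    cons_val_fin_one, Fin.sum_univ_five, Fin.isValue, cons_val_zero, cons_val_one, cons_val,
    zero_mul, add_zero, zero_add, one_mul]
  ring

lemma binary_quadratic_pos {α β γ x y : ℝ} (hα : 0 < α) (hdisc : β ^ 2 < α * γ)
    (hxy : x ≠ 0 ∨ y ≠ 0) : 0 < α * x ^ 2 + 2 * β * x * y + γ * y ^ 2 := by
  have key : α * (α * x ^ 2 + 2 * β * x * y + γ * y ^ 2) =
      (α * x + β * y) ^ 2 + (α * γ - β ^ 2) * y ^ 2 := by ring
  have hgap : 0 < α * γ - β ^ 2 := by linarith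
  rcases eq_or_ne y 0 with rfl | hy
  · have hx : x ≠ 0 := by simpa using hxy
    simpa using mul_pos hα (sq_pos_iff.mpr hx)
  · refine pos_of_mul_pos_right (key ▸ ?_) hα.le
    have : 0 < (α * γ - β ^ 2) * y ^ 2 := mul_pos hgap (sq_pos_iff.mpr hy)
    linarith [sq_nonneg (α * x + β * y)]

lemma FGS_posDef {h α β γ : ℝ} (hh : 0 < h) (hα : 0 < α) (hdisc : β ^ 2 < α * γ) :
    (FGS h α β γ).PosDef := by
  refine .of_dotProduct_mulVec_pos (FGS_isHermitian h α β γ) fun x hx => ?_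
  rw [dotProduct_FGS_mulVec]
  have hQ : 0 ≤ α * x 0 ^ 2 + 2 * β * x 0 * x 3 + γ * x 3 ^ 2 := by
    by_cases h03 : x 0 ≠ 0 ∨ x 3 ≠ 0
    · exact (binary_quadratic_pos hα hdisc h03).le
    · simp_all
  obtain h03 | h1 | h2 | h4 : (x 0 ≠ 0 ∨ x 3 ≠ 0) ∨ x 1 ≠ 0 ∨ x 2 ≠ 0 ∨ x 4 ≠ 0 := by
    contrapose! hx
    ext i
    fin_cases i <;> simp [hx]
  · have := binary_quadratic_pos hα hdisc h03
    positivity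
  all_goals positivity

theorem FG_symmetrizer_general (μ lam η h ux uy hstar γ : ℝ)
    (hμ : 0 < μ) (hlam : 0 < lam) (hhst : 0 < hstar) (hh : hstar ≤ h)
    (α β : ℝ) (hα : α = 1 + μ * lam * η ^ 2 / (3 * h ^ 3)) :
    (FGS h α β γ * FGAx ux h α β).IsSymm ∧
    (FGS h α β γ * FGAy uy h α β).IsSymm ∧
    (β ^ 2 / α < γ → (FGS h α β γ).PosDef) := by
  have hh₀ : 0 < h := hhst.trans_le hh
  have hα₀ : 0 < α := by rw [hα]; positivity
  refine ⟨isSymm_FGS_mul_FGAx h α β γ ux, isSymm_FGS_mul_FGAy h α β γ uy, fun hγ => ?_⟩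
  rw [div_lt_iff₀ hα₀, mul_comm] at hγ
  exact FGS_posDef hh₀ hα₀ hγ

/-- `S` is a symmetrizer of the Favrie-Gavrilyuk system: `S A_x` and `S A_y` are
symmetric, and if `h ≥ h⋆ > 0` and `γ > β²/α` then `S` is symmetric positive definite. -/
theorem FG_symmetrizer (μ lam η h ux uy hstar γ : ℝ)
    (hμ : 0 < μ) (hlam : 0 < lam) (hhst : 0 < hstar) (hh : hstar ≤ h)
    (α β : ℝ) (hα : α = 1 + μ * lam * η ^ 2 / (3 * h ^ 3))
    (hβ : β = μ * lam / (3 * h) * (1 - 2 * η / h)) :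
    (FGS h α β γ * FGAx ux h α β).IsSymm ∧
    (FGS h α β γ * FGAy uy h α β).IsSymm ∧
    (β ^ 2 / α < γ → (FGS h α β γ).PosDef) :=
  FG_symmetrizer_general μ lam η h ux uy hstar γ hμ hlam hhst hh α β hα
end
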